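/- For every p ∈ [1/2, 1) there is no comb domain C with Hardy number h(C) = p; that is, the range of the Hardy number over all comb domains is contained in [1, +∞]. -/

import Mathlib

open Complex Set MeasureTheory

/-- `f` belongs to the Hardy space `H^p(𝔻)`: it is holomorphic on the unit disk and the
integral means of `|f|^p` over circles of radius `r < 1` are uniformly bounded. -/
def MemHardy (p : ℝ) (f : ℂ → ℂ) : Prop :=
  DifferentiableOn ℂ f (Metric.ball 0 1) ∧
  ∃ M : ℝ, ∀ r : ℝ, 0 < r → r < 1 →
    (∫ θ in (0:ℝ)..(2 * Real.pi),
        ‖f ((r : ℂ) * Complex.exp ((θ : ℂ) * Complex.I))‖ ^ p) ≤ M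

/-- `f` is a Riemann map of the unit disk onto `D`: a holomorphic injection of `𝔻`
with image `D` (hence a conformal bijection from `𝔻` onto `D`). -/
def IsRiemannMap (f : ℂ → ℂ) (D : Set ℂ) : Prop :=
  DifferentiableOn ℂ f (Metric.ball 0 1) ∧ Set.InjOn f (Metric.ball 0 1) ∧
  f '' (Metric.ball 0 1) = D

/-- The Hardy number of (the domain uniformized by) `f`:
the supremum of all `p > 0` with `f ∈ H^p(𝔻)`, as an extended nonnegative real. -/
noncomputable def hardyNumber (f : ℂ → ℂ) : ENNReal :=
  sSup {x : ENNReal | ∃ p : ℝ, 0 < p ∧ MemHardy p f ∧ x = ENNReal.ofReal p}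

/-- `C` is a comb domain: the plane minus the vertical rays `{xₙ + iy : |y| ≥ bₙ}`,
where `(xₙ)` is strictly increasing with `x₀ = 0` and gaps bounded below by a positive
constant, and the `bₙ` are positive. -/
def IsCombDomain (C : Set ℂ) : Prop :=
  ∃ (x : ℤ → ℝ) (b : ℤ → ℝ),
    StrictMono x ∧ x 0 = 0 ∧ (∃ δ : ℝ, 0 < δ ∧ ∀ n : ℤ, δ ≤ x n - x (n - 1)) ∧
    (∀ n, 0 < b n) ∧
    C = (⋃ n : ℤ, {z : ℂ | z.re = x n ∧ b n ≤ |z.im|})ᶜ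

open Metric
open scoped Real

/-! A comb domain omits the two rays `{iy : |y| ≥ β}` with `β = b₀`, and this alone forces
`f ∈ H^q` for every `q < 1`. Indeed `v = f² + β²` then takes values in the slit plane, so
`v^(q/2)` is holomorphic, and `|arg v| ≤ π` gives `Re v^(q/2) ≥ cos(πq/2) |v|^(q/2)`. Since
`|f|^q ≤ |v|^(q/2) + β^q`, the function `|f|^q` has the harmonic majorant
`Re v^(q/2) / cos(πq/2) + β^q`, whose circle means are constant by the mean value property. -/

def imaginaryRays (β : ℝ) : Set ℂ := {w | w.re = 0 ∧ β ≤ |w.im|}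

theorem memHardy_of_norm_rpow_le_re {f g : ℂ → ℂ} {p A B : ℝ} (hp : 0 ≤ p)
    (hf : DifferentiableOn ℂ f (ball 0 1)) (hg : DifferentiableOn ℂ g (ball 0 1))
    (hfg : ∀ z ∈ ball (0 : ℂ) 1, ‖f z‖ ^ p ≤ A * (g z).re + B) : MemHardy p f := by
  refine ⟨hf, 2 * π * (A * (g 0).re + B), fun r hr0 hr1 => ?_⟩
  have hdisk : closedBall (0 : ℂ) |r| ⊆ ball 0 1 :=
    closedBall_subset_ball (by rwa [abs_of_pos hr0])
  have hcircle : sphere (0 : ℂ) |r| ⊆ ball 0 1 := sphere_subset_closedBall.trans hdisk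
  have hf_int : CircleIntegrable (fun z => ‖f z‖ ^ p) 0 r :=
    ((hf.continuousOn.norm.rpow_const fun _ _ => Or.inr hp).mono hcircle).circleIntegrable'
  have hg_int : CircleIntegrable g 0 r := (hg.continuousOn.mono hcircle).circleIntegrable'
  have hre_int : CircleIntegrable (fun z => (g z).re) 0 r :=
    ((continuous_re.comp_continuousOn hg.continuousOn).mono hcircle).circleIntegrable'
  have hAre_int : CircleIntegrable (fun z => A * (g z).re) 0 r := hre_int.const_mul A
  have hmean : Real.circleAverage (fun z => A * (g z).re) 0 r = A * (g 0).re := by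
    rw [← (hg.diffContOnCl_ball hdisk).circleAverage, ← reCLM_apply,
      ← reCLM.circleAverage_comp_comm hg_int]
    exact Real.circleAverage_fun_smul (𝕜 := ℝ) (f := fun z => (g z).re)
  calc ∫ θ in (0 : ℝ)..2 * π, ‖f (r * Complex.exp (θ * Complex.I))‖ ^ p
      = 2 * π * Real.circleAverage (fun z => ‖f z‖ ^ p) 0 r := by
        rw [Real.circleAverage_def, smul_eq_mul, ← mul_assoc, mul_inv_cancel₀ Real.two_pi_pos.ne',
          one_mul]
        simp only [circleMap_zero]
    _ ≤ 2 * π * Real.circleAverage (fun z => A * (g z).re + B) 0 r := by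
        gcongr 2 * π * ?_
        exact Real.circleAverage_mono hf_int (hAre_int.add (circleIntegrable_const B 0 r))
          fun z hz => hfg z (hcircle hz)
    _ = 2 * π * (A * (g 0).re + B) := by
        rw [Real.circleAverage_fun_add hAre_int (circleIntegrable_const B 0 r),
          hmean, Real.circleAverage_const]

theorem sq_add_ofReal_sq_mem_slitPlane {w : ℂ} {β : ℝ} (hw : w ∉ imaginaryRays β) :
    w ^ 2 + (β : ℂ) ^ 2 ∈ slitPlane := by
  have hre : (w ^ 2 + (β : ℂ) ^ 2).re = w.re ^ 2 - w.im ^ 2 + β ^ 2 := by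
    simp only [sq, ← ofReal_mul, add_re, mul_re, ofReal_re]
  have him : (w ^ 2 + (β : ℂ) ^ 2).im = 2 * w.re * w.im := by
    simp only [sq, ← ofReal_mul, add_im, mul_im, ofReal_im, add_zero]
    ring
  rw [mem_slitPlane_iff, hre, him]
  by_cases hre0 : w.re = 0
  · have him_lt : |w.im| < β := lt_of_not_ge fun h => hw ⟨hre0, h⟩
    left
    nlinarith [sq_abs w.im, abs_nonneg w.im]
  · by_cases him0 : w.im = 0
    · left
      rw [him0]
      nlinarith [sq_pos_of_ne_zero hre0, sq_nonneg β]
    · exact Or.inr (mul_ne_zero (mul_ne_zero two_ne_zero hre0) him0)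

theorem cos_pi_mul_mul_rpow_le_re_cpow (v : ℂ) {s : ℝ} (hs0 : 0 ≤ s) (hs1 : s ≤ 1) :
    Real.cos (π * s) * ‖v‖ ^ s ≤ (v ^ (s : ℂ)).re := by
  rw [cpow_ofReal_re, mul_comm]
  refine mul_le_mul_of_nonneg_left ?_ (Real.rpow_nonneg (norm_nonneg v) s)
  rw [← Real.cos_abs (arg v * s)]
  refine Real.cos_le_cos_of_nonneg_of_le_pi (abs_nonneg _) (by nlinarith [Real.pi_pos]) ?_
  rw [abs_mul, abs_of_nonneg hs0]
  exact mul_le_mul_of_nonneg_right (abs_arg_le_pi v) hs0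

theorem norm_rpow_le_norm_sq_add_sq_rpow_add {β q : ℝ} (w : ℂ) (hβ : 0 ≤ β) (hq0 : 0 ≤ q)
    (hq2 : q ≤ 2) : ‖w‖ ^ q ≤ ‖w ^ 2 + (β : ℂ) ^ 2‖ ^ (q / 2) + β ^ q := by
  have hsq_rpow : ∀ x : ℝ, 0 ≤ x → (x ^ 2) ^ (q / 2) = x ^ q := fun x hx => by
    rw [← Real.rpow_natCast, ← Real.rpow_mul hx, Nat.cast_ofNat, mul_div_cancel₀ q two_ne_zero]
  have hsq_le : ‖w‖ ^ 2 ≤ ‖w ^ 2 + (β : ℂ) ^ 2‖ + β ^ 2 := by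
    calc ‖w‖ ^ 2 = ‖(w ^ 2 + (β : ℂ) ^ 2) - (β : ℂ) ^ 2‖ := by rw [add_sub_cancel_right, norm_pow]
      _ ≤ ‖w ^ 2 + (β : ℂ) ^ 2‖ + ‖(β : ℂ) ^ 2‖ := norm_sub_le _ _
      _ = ‖w ^ 2 + (β : ℂ) ^ 2‖ + β ^ 2 := by rw [norm_pow, norm_real, Real.norm_eq_abs, sq_abs]
  calc ‖w‖ ^ q = (‖w‖ ^ 2) ^ (q / 2) := (hsq_rpow _ (norm_nonneg w)).symm
    _ ≤ (‖w ^ 2 + (β : ℂ) ^ 2‖ + β ^ 2) ^ (q / 2) := by gcongr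
    _ ≤ ‖w ^ 2 + (β : ℂ) ^ 2‖ ^ (q / 2) + (β ^ 2) ^ (q / 2) :=
        Real.rpow_add_le_add_rpow (norm_nonneg _) (sq_nonneg β) (by linarith) (by linarith)
    _ = ‖w ^ 2 + (β : ℂ) ^ 2‖ ^ (q / 2) + β ^ q := by rw [hsq_rpow β hβ]

theorem norm_rpow_le_re_cpow_add {β q : ℝ} (w : ℂ) (hβ : 0 ≤ β) (hq0 : 0 ≤ q) (hq1 : q < 1) :
    ‖w‖ ^ q ≤ (Real.cos (π * (q / 2)))⁻¹ * ((w ^ 2 + (β : ℂ) ^ 2) ^ ((q / 2 : ℝ) : ℂ)).re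
      + β ^ q := by
  have hcos : 0 < Real.cos (π * (q / 2)) :=
    Real.cos_pos_of_mem_Ioo ⟨by nlinarith [Real.pi_pos], by nlinarith [Real.pi_pos]⟩
  have hre := cos_pi_mul_mul_rpow_le_re_cpow (w ^ 2 + (β : ℂ) ^ 2) (s := q / 2) (by linarith)
    (by linarith)
  have hnorm := norm_rpow_le_norm_sq_add_sq_rpow_add w hβ hq0 (by linarith)
  linarith [(le_inv_mul_iff₀ hcos).2 hre]

theorem memHardy_of_mapsTo_compl_imaginaryRays {f : ℂ → ℂ} {β q : ℝ}
    (hf : DifferentiableOn ℂ f (ball 0 1)) (hβ : 0 ≤ β)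
    (hf_rays : MapsTo f (ball 0 1) (imaginaryRays β)ᶜ)
    (hq0 : 0 ≤ q) (hq1 : q < 1) : MemHardy q f := by
  have hg : DifferentiableOn ℂ (fun z => (f z ^ 2 + (β : ℂ) ^ 2) ^ ((q / 2 : ℝ) : ℂ))
      (ball 0 1) :=
    ((hf.pow 2).add_const _).cpow_const fun _ hz => sq_add_ofReal_sq_mem_slitPlane (hf_rays hz)
  exact memHardy_of_norm_rpow_le_re hq0 hf hg fun z _ => norm_rpow_le_re_cpow_add (f z) hβ hq0 hq1

theorem one_le_hardyNumber_of_memHardy {f : ℂ → ℂ} (hf : ∀ q : ℝ, 0 < q → q < 1 → MemHardy q f) :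
    1 ≤ hardyNumber f := by
  refine le_of_forall_lt fun c hc => ?_
  obtain ⟨q, -, hcq, hq1⟩ := ENNReal.lt_iff_exists_real_btwn.1 hc
  have hq0 : 0 < q := ENNReal.ofReal_pos.1 (pos_of_gt hcq)
  exact hcq.trans_le (le_sSup ⟨q, hq0, hf q hq0 (ENNReal.ofReal_lt_one.1 hq1), rfl⟩)

theorem IsCombDomain.exists_subset_compl_imaginaryRays {C : Set ℂ} (hC : IsCombDomain C) :
    ∃ β : ℝ, 0 ≤ β ∧ C ⊆ (imaginaryRays β)ᶜ := by
  obtain ⟨x, b, -, hx0, -, hb, rfl⟩ := hC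
  exact ⟨b 0, (hb 0).le, fun w hw hray => hw (mem_iUnion.2 ⟨0, by rwa [hx0]⟩)⟩

theorem IsCombDomain.one_le_hardyNumber {C : Set ℂ} {f : ℂ → ℂ} (hC : IsCombDomain C)
    (hf : IsRiemannMap f C) : 1 ≤ hardyNumber f := by
  obtain ⟨hf_diff, -, hf_image⟩ := hf
  obtain ⟨β, hβ, hC_rays⟩ := hC.exists_subset_compl_imaginaryRays
  have hf_rays : MapsTo f (ball 0 1) (imaginaryRays β)ᶜ :=
    fun z hz => hC_rays (hf_image ▸ mem_image_of_mem f hz)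
  exact one_le_hardyNumber_of_memHardy fun q hq0 hq1 =>
    memHardy_of_mapsTo_compl_imaginaryRays hf_diff hβ hf_rays hq0.le hq1

/-- No comb domain has Hardy number in `[1/2, 1)`: the range of the Hardy number over
comb domains is contained in `[1, +∞]`. -/
theorem hardyNumber_comb_not_in_Ico (p : ENNReal) (hp : p ∈ Set.Ico (1/2 : ENNReal) 1) :
    ¬ ∃ (C : Set ℂ) (f : ℂ → ℂ), IsCombDomain C ∧ IsRiemannMap f C ∧
      hardyNumber f = p := by
  rintro ⟨C, f, hC, hf, rfl⟩
  exact (hC.one_le_hardyNumber hf).not_gt hp.2
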